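/- arXiv:cs/0203006 — 4 statements merged into one kernel-verified Lean document; each statement's English description precedes it below -/
import Mathlib

section
/- If a directed supremum of term algebras satisfies a finite set C of joinability statements under a substitution θ, then some single algebra in the directed set satisfies all statements of C under θ. -/
namespace CRWL

/-- Terms over variables `V`, constructor symbols `C`, and function symbols `F`. -/
inductive Tm (V C F : Type) : Type
  | var : V → Tm V C F
  | bot : Tm V C F
  | cons : C → List (Tm V C F) → Tm V C F
  | fn : F → List (Tm V C F) → Tm V C F

variable {V C F : Type}

/-- Approximation ordering on partial constructor terms. -/
inductive Approx : Tm V C F → Tm V C F → Prop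
  | bot (t) : Approx .bot t
  | var (X) : Approx (.var X) (.var X)
  | cons (c : C) {ss ts : List (Tm V C F)} : ss.length = ts.length →
      (∀ p ∈ ss.zip ts, Approx p.1 p.2) → Approx (.cons c ss) (.cons c ts)

/-- Partial constructor terms: no function symbols. -/
inductive IsCTm : Tm V C F → Prop
  | var (X) : IsCTm (.var X)
  | bot : IsCTm .bot
  | cons (c) {ts} : (∀ t ∈ ts, IsCTm t) → IsCTm (.cons c ts)

/-- Total constructor terms: no `⊥`, no function symbols. -/
inductive TotalC : Tm V C F → Prop
  | var (X) : TotalC (.var X)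
  | cons (c) {ts} : (∀ t ∈ ts, TotalC t) → TotalC (.cons c ts)

/-- Homomorphic extension of a substitution to terms. -/
def subst (θ : V → Tm V C F) : Tm V C F → Tm V C F
  | .var X => θ X
  | .bot => .bot
  | .cons c ts => .cons c (ts.attach.map (fun x => subst θ x.1))
  | .fn f ts => .fn f (ts.attach.map (fun x => subst θ x.1))
termination_by t => sizeOf t
decreasing_by all_goals (simp_wf; have := List.sizeOf_lt_of_mem x.2; omega)

/-- A (term-)algebra interpretation of the function symbols: cones of partial
constructor terms as results. -/
abbrev Alg (V C F : Type) := F → List (Tm V C F) → Set (Tm V C F)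

/-- `Eval A θ e u` : `u` belongs to the evaluation cone `[[e]]^A_θ`. -/
inductive Eval (A : Alg V C F) (θ : V → Tm V C F) : Tm V C F → Tm V C F → Prop
  | var {X u} : Approx u (θ X) → Eval A θ (.var X) u
  | bot : Eval A θ .bot .bot
  | cons {c : C} {es us : List (Tm V C F)} {u} : es.length = us.length →
      (∀ p ∈ es.zip us, Eval A θ p.1 p.2) →
      Approx u (.cons c us) → Eval A θ (.cons c es) u
  | fn {f : F} {es us : List (Tm V C F)} {u} : es.length = us.length →
      (∀ p ∈ es.zip us, Eval A θ p.1 p.2) →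
      u ∈ A f us → Eval A θ (.fn f es) u

/-- `A` is a term algebra: every value is a cone (contains `⊥`, down-closed) and the
interpretations are monotone wrt the approximation ordering on arguments. -/
def IsTAlg (A : Alg V C F) : Prop :=
  ∀ f ts, Tm.bot ∈ A f ts ∧
    (∀ u ∈ A f ts, ∀ v, Approx v u → v ∈ A f ts) ∧
    (∀ ts', ts.length = ts'.length → (∀ p ∈ ts.zip ts', Approx p.1 p.2) →
      A f ts ⊆ A f ts')

/-- A conditional rewrite rule `head(lhs) → rhs ⇐ cond`. -/
structure Rul (V C F : Type) where
  head : F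
  lhs : List (Tm V C F)
  rhs : Tm V C F
  cond : List (Tm V C F × Tm V C F)

/-- Satisfaction of a joinability statement `a ⋈ b` in `A` under valuation `θ`. -/
def Sat (A : Alg V C F) (θ : V → Tm V C F) (a b : Tm V C F) : Prop :=
  ∃ t, TotalC t ∧ Eval A θ a t ∧ Eval A θ b t

/-- The immediate consequence operator of a program `R`. -/
def TR (R : Set (Rul V C F)) (A : Alg V C F) : Alg V C F :=
  fun f ts => insert Tm.bot
    { u | ∃ ru ∈ R, ru.head = f ∧ ∃ θ : V → Tm V C F,
        (∀ X, IsCTm (θ X)) ∧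
        ru.lhs.length = ts.length ∧
        (∀ p ∈ ru.lhs.zip ts, Approx (subst θ p.1) p.2) ∧
        (∀ p ∈ ru.cond, Sat A Tm.var (subst θ p.1) (subst θ p.2)) ∧
        Eval A Tm.var (subst θ ru.rhs) u }

/-- Pointwise-union supremum of a set of algebras. -/
def supAlg {V C F : Type} (D : Set (Alg V C F)) : Alg V C F :=
  fun f ts => ⋃ A ∈ D, A f ts

theorem Eval.mono {A B : Alg V C F} {θ : V → Tm V C F}
    (hAB : ∀ f ts, A f ts ⊆ B f ts) :
    ∀ {e u}, Eval A θ e u → Eval B θ e u := by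
  intro e u h
  induction h with
  | var h => exact .var h
  | bot => exact .bot
  | cons hlen h happ ih => exact .cons hlen ih happ
  | fn hlen h hmem ih => exact .fn hlen ih (hAB _ _ hmem)

theorem exists_forall_of_forall_exists {α : Type*} {D : Set (Alg V C F)}
    (hne : D.Nonempty)
    (hdir : DirectedOn (fun A B : Alg V C F => ∀ f ts, A f ts ⊆ B f ts) D)
    {P : Alg V C F → α → Prop}
    (mono : ∀ {A B}, B ∈ D → (∀ f ts, A f ts ⊆ B f ts) → ∀ x, P A x → P B x)
    (l : List α) (h : ∀ x ∈ l, ∃ A ∈ D, P A x) :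
    ∃ A ∈ D, ∀ x ∈ l, P A x := by
  induction l with
  | nil => exact ⟨hne.choose, hne.choose_spec, by simp⟩
  | cons a l ih =>
    obtain ⟨A, hA, hPa⟩ := h a (by simp)
    obtain ⟨B, hB, hPl⟩ := ih fun x hx => h x (by simp [hx])
    obtain ⟨E, hE, hAE, hBE⟩ := hdir A hA B hB
    refine ⟨E, hE, ?_⟩
    intro x hx
    rcases List.mem_cons.mp hx with rfl | hx
    · exact mono hE hAE x hPa
    · exact mono hE hBE x (hPl x hx)

theorem eval_sup {D : Set (Alg V C F)} (hne : D.Nonempty)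
    (hdir : DirectedOn (fun A B : Alg V C F => ∀ f ts, A f ts ⊆ B f ts) D)
    {θ : V → Tm V C F} :
    ∀ {e u}, Eval (supAlg D) θ e u → ∃ A ∈ D, Eval A θ e u := by
  intro e u h
  induction h with
  | var h => exact ⟨hne.choose, hne.choose_spec, .var h⟩
  | bot => exact ⟨hne.choose, hne.choose_spec, .bot⟩
  | @cons c es us u hlen h happ ih =>
    obtain ⟨A, hA, hall⟩ := exists_forall_of_forall_exists hne hdir
      (P := fun A p => Eval A θ p.1 p.2)
      (fun _ hsub x hx => by exact Eval.mono hsub hx) (es.zip us) ih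
    exact ⟨A, hA, .cons hlen hall happ⟩
  | @fn f es us u hlen h hmem ih =>
    obtain ⟨A, hA, hall⟩ := exists_forall_of_forall_exists hne hdir
      (P := fun A p => Eval A θ p.1 p.2)
      (fun _ hsub x hx => by exact Eval.mono hsub hx) (es.zip us) ih
    simp only [supAlg, Set.mem_iUnion] at hmem
    obtain ⟨B, hB, huB⟩ := hmem
    obtain ⟨E, hE, hAE, hBE⟩ := hdir A hA B hB
    exact ⟨E, hE, .fn hlen (fun p hp => Eval.mono hAE (hall p hp)) (hBE f us huB)⟩

/-- If the supremum of a directed set of term algebras satisfies a finite set of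
joinability statements under `θ`, some single algebra of the set satisfies them all. -/
theorem sat_directed {V C F : Type} (D : Set (Alg V C F)) (hne : D.Nonempty)
    (hdir : DirectedOn (fun A B : Alg V C F => ∀ f ts, A f ts ⊆ B f ts) D)
    (hTA : ∀ A ∈ D, IsTAlg A) (θ : V → Tm V C F)
    (Cs : List (Tm V C F × Tm V C F))
    (h : ∀ p ∈ Cs, Sat (supAlg D) θ p.1 p.2) :
    ∃ A ∈ D, ∀ p ∈ Cs, Sat A θ p.1 p.2 := by
  refine exists_forall_of_forall_exists hne hdir
    (P := fun A p => Sat A θ p.1 p.2) ?_ Cs ?_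
  · rintro A B _ hsub p ⟨t, ht, ha, hb⟩
    exact ⟨t, ht, Eval.mono hsub ha, Eval.mono hsub hb⟩
  · intro p hp
    obtain ⟨t, ht, ha, hb⟩ := h p hp
    obtain ⟨A, hA, haA⟩ := eval_sup hne hdir ha
    obtain ⟨B, hB, hbB⟩ := eval_sup hne hdir hb
    obtain ⟨E, hE, hAE, hBE⟩ := hdir A hA B hB
    exact ⟨E, hE, t, ht, Eval.mono hAE haA, Eval.mono hBE hbB⟩

end CRWL
end

section
/- For a renaming ρ, the adjunction-like property holds between the induced operators: T_{ρ⁻¹}(A) ⊑ B if and only if A ⊑ T_ρ(B), for all term algebras A, B. -/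
namespace CRWL

variable {V C F : Type}

/-- The algebra transformer induced by a renaming `ρ`: `f^{A_ρ} = ρ(f)^A`. -/
def Tren {V C F : Type} (ρ : F → F) (A : Alg V C F) : Alg V C F :=
  fun f ts => A (ρ f) ts

/-- The reverse transformer: `f` is interpreted as the union of `g^A` over all `g`
with `ρ(g) = f` (the bottom interpretation when there is no such `g`). -/
def TrenInv {V C F : Type} (ρ : F → F) (A : Alg V C F) : Alg V C F :=
  fun f ts => insert Tm.bot (⋃ g ∈ {g | ρ g = f}, A g ts)

/-- Adjunction-like property: `T_{ρ⁻¹}(A) ⊑ B ↔ A ⊑ T_ρ(B)` for term algebras. -/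
theorem TrenInv_adjoint {V C F : Type} (ρ : F → F) (A B : Alg V C F)
    (hA : IsTAlg A) (hB : IsTAlg B) :
    (∀ f ts, TrenInv ρ A f ts ⊆ B f ts) ↔ (∀ f ts, A f ts ⊆ Tren ρ B f ts) := by
  constructor
  · intro h f ts u hu
    exact h (ρ f) ts (Set.mem_insert_of_mem _ (Set.mem_biUnion rfl hu))
  · intro h f ts u hu
    rcases hu with rfl | hu
    · exact (hB f ts).1
    · rcases Set.mem_iUnion₂.1 hu with ⟨g, hg, hgu⟩
      have := h g ts hgu
      rwa [Tren, hg] at this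

end CRWL
end

section
/- If A is a consistent term algebra, then for every term r and every total constructor substitution θ, the instantiation of the evaluation cone of r is contained in the evaluation cone of rθ: ([[r]]^A_id)θ ⊆ [[rθ]]^A_id. -/
namespace CRWL

variable {V C F : Type}

/-- A term algebra is consistent iff `(f^A(t̄))θ ⊆ f^A(t̄θ)` for every total
constructor substitution `θ`. -/
def Consistent {V C F : Type} (A : Alg V C F) : Prop :=
  ∀ f ts (θ : V → Tm V C F), (∀ X, TotalC (θ X)) →
    ∀ u ∈ A f ts, subst θ u ∈ A f (ts.map (subst θ))

/-! Induction on the derivation of `u ∈ [[r]]^A_id`. Substitution commutes with constructors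
and preserves approximation, which handles constructor nodes; at a variable `X` the cone of the
constructor term `θ X` is everything approximating it; at a function call, consistency of `A` is
exactly the required step. -/

theorem _root_.List.forall_mem_zip_self {α : Type*} {R : α → α → Prop} {l : List α}
    (h : ∀ a ∈ l, R a a) : ∀ p ∈ l.zip l, R p.1 p.2 := by
  induction l with
  | nil => simp
  | cons a l ih =>
    simp only [List.zip_cons_cons, List.forall_mem_cons] at h ⊢
    exact ⟨h.1, ih h.2⟩

theorem _root_.List.forall_mem_zip_map {α β γ δ : Type*} {R : γ → δ → Prop}
    {f : α → γ} {g : β → δ} {l₁ : List α} {l₂ : List β} (h : ∀ p ∈ l₁.zip l₂, R (f p.1) (g p.2)) :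
    ∀ p ∈ (l₁.map f).zip (l₂.map g), R p.1 p.2 := by
  intro p hp
  rw [List.zip_map] at hp
  obtain ⟨q, hq, rfl⟩ := List.mem_map.1 hp
  exact h q hq

theorem subst_var (θ : V → Tm V C F) (X : V) : subst θ (.var X) = θ X := by rw [subst]

theorem subst_bot (θ : V → Tm V C F) : subst θ (.bot : Tm V C F) = .bot := by rw [subst]

theorem subst_cons (θ : V → Tm V C F) (c : C) (ts : List (Tm V C F)) :
    subst θ (.cons c ts) = .cons c (ts.map (subst θ)) := by
  rw [subst]; simp

theorem subst_fn (θ : V → Tm V C F) (f : F) (ts : List (Tm V C F)) :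
    subst θ (.fn f ts) = .fn f (ts.map (subst θ)) := by
  rw [subst]; simp

theorem TotalC.isCTm {t : Tm V C F} (h : TotalC t) : IsCTm t := by
  induction h with
  | var X => exact .var X
  | cons c _ ih => exact .cons c ih

theorem IsCTm.approx_refl {t : Tm V C F} (h : IsCTm t) : Approx t t := by
  induction h with
  | var X => exact .var X
  | bot => exact .bot _
  | cons c _ ih => exact .cons c rfl (List.forall_mem_zip_self ih)

theorem Approx.subst {θ : V → Tm V C F} (hθ : ∀ X, IsCTm (θ X))
    {s t : Tm V C F} (h : Approx s t) : Approx (subst θ s) (subst θ t) := by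
  induction h with
  | bot t => rw [subst_bot]; exact .bot _
  | var X => rw [subst_var]; exact (hθ X).approx_refl
  | cons c hlen _ ih =>
    rw [subst_cons, subst_cons]
    exact .cons c (by simp [hlen]) (List.forall_mem_zip_map ih)

theorem IsCTm.eval_self (A : Alg V C F) {t : Tm V C F} (h : IsCTm t) :
    Eval A Tm.var t t := by
  induction h with
  | var X => exact .var (.var X)
  | bot => exact .bot
  | cons c hts ih =>
    exact .cons rfl (List.forall_mem_zip_self ih) (IsCTm.cons c hts).approx_refl

theorem IsCTm.eval_of_approx (A : Alg V C F) {t u : Tm V C F} (ht : IsCTm t)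
    (hu : Approx u t) : Eval A Tm.var t u := by
  cases ht with
  | var X => exact .var hu
  | bot => cases hu; exact .bot
  | cons c hts =>
    exact .cons rfl (List.forall_mem_zip_self fun t ht => (hts t ht).eval_self A) hu

/-- In a consistent term algebra, instantiation of evaluation cones by a total
constructor substitution is contained in the evaluation cone of the instantiated
term: `([[r]]^A_id)θ ⊆ [[rθ]]^A_id`. -/
theorem consistent_eval_subst {V C F : Type} (A : Alg V C F) (hA : Consistent A)
    (r : Tm V C F) (θ : V → Tm V C F) (hθ : ∀ X, TotalC (θ X)) :
    ∀ u, Eval A Tm.var r u → Eval A Tm.var (subst θ r) (subst θ u) := by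
  have hθc : ∀ X, IsCTm (θ X) := fun X => (hθ X).isCTm
  intro u h
  induction h with
  | @var X u hu =>
    have hu' := hu.subst hθc
    rw [subst_var] at hu' ⊢
    exact (hθc X).eval_of_approx A hu'
  | bot => rw [subst_bot]; exact .bot
  | @cons c es us u hlen _ hu ih =>
    have hu' := hu.subst hθc
    rw [subst_cons] at hu' ⊢
    exact .cons (by simp [hlen]) (List.forall_mem_zip_map ih) hu'
  | @fn f es us u hlen _ hu ih =>
    rw [subst_fn]
    exact .fn (by simp [hlen]) (List.forall_mem_zip_map ih) (hA f us θ hθ u hu)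

end CRWL
end

section
/- Two programs P and Q are deletion-equivalent (P \ σ and Q \ σ have the same consistent term models for every signature σ) if and only if for every function symbol f they have the same set of consistent term models of the subprogram of rules defining f. -/
namespace CRWL

variable {V C F : Type}

/-- The consistent term models (pre-fixpoints of the immediate consequence operator)
of a program. -/
def ConsModels {V C F : Type} (R : Set (Rul V C F)) : Set (Alg V C F) :=
  {A | IsTAlg A ∧ Consistent A ∧ ∀ f ts, TR R A f ts ⊆ A f ts}

/-- Deletion of a signature: keep the rules whose defined symbol is not in `σ`. -/
def delP {V C F : Type} (P : Set (Rul V C F)) (σ : Set F) : Set (Rul V C F) :=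
  {ru ∈ P | ru.head ∉ σ}

/-- The consistent term models of the subprogram of rules defining `f`. -/
def Mf {V C F : Type} (P : Set (Rul V C F)) (f : F) : Set (Alg V C F) :=
  ConsModels {ru ∈ P | ru.head = f}

private lemma TR_head_filter (R : Set (Rul V C F)) (A : Alg V C F) (f : F)
    (ts : List (Tm V C F)) :
    TR {ru ∈ R | ru.head = f} A f ts = TR R A f ts := by
  unfold TR
  congr 1
  ext u
  constructor
  · rintro ⟨ru, ⟨hR, _⟩, h⟩; exact ⟨ru, hR, h⟩
  · rintro ⟨ru, hR, hf, h⟩; exact ⟨ru, ⟨hR, hf⟩, hf, h⟩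

private lemma TR_head_ne (R : Set (Rul V C F)) (A : Alg V C F) {f g : F} (hfg : f ≠ g)
    (ts : List (Tm V C F)) (hbot : Tm.bot ∈ A g ts) :
    TR {ru ∈ R | ru.head = f} A g ts ⊆ A g ts := by
  intro u hu
  rcases hu with hu | ⟨ru, ⟨_, hf⟩, hg, _⟩
  · exact hu ▸ hbot
  · exact absurd (hf ▸ hg) hfg

private lemma mem_Mf_iff {A : Alg V C F} (P : Set (Rul V C F)) (f : F) :
    A ∈ Mf P f ↔ IsTAlg A ∧ Consistent A ∧
      ∀ ts, TR {ru ∈ P | ru.head = f} A f ts ⊆ A f ts := by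
  constructor
  · rintro ⟨hT, hC, hpre⟩; exact ⟨hT, hC, fun ts => hpre f ts⟩
  · rintro ⟨hT, hC, hpre⟩
    refine ⟨hT, hC, fun g ts => ?_⟩
    by_cases hg : f = g
    · subst hg; exact hpre ts
    · exact TR_head_ne P A hg ts (hT g ts).1

private lemma step {P Q : Set (Rul V C F)} (h : ∀ f, Mf P f = Mf Q f) (σ : Set F)
    {A : Alg V C F} (hA : A ∈ ConsModels (delP P σ)) : A ∈ ConsModels (delP Q σ) := by
  obtain ⟨hT, hC, hpre⟩ := hA
  refine ⟨hT, hC, fun f ts => ?_⟩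
  rw [← TR_head_filter]
  by_cases hf : f ∈ σ
  · intro u hu
    rcases hu with hu | ⟨ru, ⟨⟨_, hns⟩, hhd⟩, _⟩
    · exact hu ▸ (hT f ts).1
    · exact absurd (hhd ▸ hf) hns
  · have hsetP : {ru ∈ delP P σ | ru.head = f} = {ru ∈ P | ru.head = f} := by
      ext ru
      simp only [delP, Set.mem_setOf_eq]
      constructor
      · rintro ⟨⟨h1, _⟩, h2⟩; exact ⟨h1, h2⟩
      · rintro ⟨h1, h2⟩; exact ⟨⟨h1, h2 ▸ hf⟩, h2⟩
    have hsetQ : {ru ∈ delP Q σ | ru.head = f} = {ru ∈ Q | ru.head = f} := by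
      ext ru
      simp only [delP, Set.mem_setOf_eq]
      constructor
      · rintro ⟨⟨h1, _⟩, h2⟩; exact ⟨h1, h2⟩
      · rintro ⟨h1, h2⟩; exact ⟨⟨h1, h2 ▸ hf⟩, h2⟩
    have hAMf : A ∈ Mf P f := by
      refine (mem_Mf_iff P f).2 ⟨hT, hC, fun ts' => ?_⟩
      rw [← hsetP, TR_head_filter]
      exact hpre f ts'
    have hAQ : A ∈ Mf Q f := (h f) ▸ hAMf
    rw [hsetQ]
    exact ((mem_Mf_iff Q f).1 hAQ).2.2 ts

/-- Two programs are deletion-equivalent (same consistent term models after deleting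
any signature) iff for every function symbol they have the same consistent term
models of the rules defining that symbol. -/
theorem deletion_equiv_iff {V C F : Type} (P Q : Set (Rul V C F))
    (hP : (Rul.head '' P).Finite) (hQ : (Rul.head '' Q).Finite) :
    (∀ σ : Set F, ConsModels (delP P σ) = ConsModels (delP Q σ)) ↔
      (∀ f, Mf P f = Mf Q f) := by
  constructor
  · intro h f
    have key : ∀ R : Set (Rul V C F), delP R {g | g ≠ f} = {ru ∈ R | ru.head = f} := by
      intro R
      ext ru
      simp only [delP, Set.mem_setOf_eq, not_not]
    have := h {g | g ≠ f}
    rw [key P, key Q] at this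
    exact this
  · intro h σ
    ext A
    exact ⟨fun hA => step h σ hA, fun hA => step (fun f => (h f).symm) σ hA⟩

end CRWL
end
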